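/- Let g ≥ 4. In Γ_{g,1}, for every i with 5 ≤ i ≤ g+1, the element y_i anti-commutes with d^{-1}d′ in the sense that y_i d^{-1} d′ = d d′^{-1} y_i (equivalently, d^{-1} d′ y_i = y_i d d′^{-1}). -/

import Mathlib

/-! # Common setup: profinite groups, Ẑ, free profinite F₂, profinite completions,
the Grothendieck–Teichmüller group, braid groups and mapping class groups. -/

universe u

/-- A (topological) group is profinite if it is a compact, Hausdorff, totally
disconnected topological group. -/
class IsProfiniteGroup (G : Type) [Group G] [TopologicalSpace G] extends
    IsTopologicalGroup G, CompactSpace G, T2Space G, TotallyDisconnectedSpace G : Prop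

/-- A model of Ẑ, the profinite completion of ℤ: a profinite commutative topological
ring whose underlying additive profinite group is the free profinite group on the
single (topological) generator `1`. These properties characterize Ẑ uniquely. -/
structure ZhatModel : Type 1 where
  R : Type
  [commRing : CommRing R]
  [top : TopologicalSpace R]
  [topRing : IsTopologicalRing R]
  [cpt : CompactSpace R]
  [t2 : T2Space R]
  [td : TotallyDisconnectedSpace R]
  free : ∀ (G : Type) [Group G] [TopologicalSpace G] [IsProfiniteGroup G] (a : G),
    ∃! φ : ContinuousMonoidHom (Multiplicative R) G,
      φ (Multiplicative.ofAdd (1 : R)) = a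

attribute [instance] ZhatModel.commRing ZhatModel.top ZhatModel.topRing
  ZhatModel.cpt ZhatModel.t2 ZhatModel.td

/-- `Z.pow a l` is the profinite power `a ^ l` for `l ∈ Ẑ`: the image of `l` under
the unique continuous homomorphism `Ẑ → G` sending `1` to `a`. -/
noncomputable def ZhatModel.pow (Z : ZhatModel) {G : Type} [Group G] [TopologicalSpace G]
    [IsProfiniteGroup G] (a : G) (l : Z.R) : G :=
  (Z.free G a).exists.choose (Multiplicative.ofAdd l)

/-- A model of the free profinite group `F̂₂` on two generators `x`, `y`. -/
structure F2Model : Type 1 where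
  F : Type
  [grp : Group F]
  [top : TopologicalSpace F]
  [pro : IsProfiniteGroup F]
  x : F
  y : F
  free : ∀ (G : Type) [Group G] [TopologicalSpace G] [IsProfiniteGroup G] (a b : G),
    ∃! φ : ContinuousMonoidHom F G, φ x = a ∧ φ y = b

attribute [instance] F2Model.grp F2Model.top F2Model.pro

/-- `F2.eval f a b` is `f(a,b)`: the image of `f ∈ F̂₂` under the unique continuous
homomorphism `F̂₂ → G` with `x ↦ a`, `y ↦ b`. -/
noncomputable def F2Model.eval (F2 : F2Model) {G : Type} [Group G] [TopologicalSpace G]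
    [IsProfiniteGroup G] (f : F2.F) (a b : G) : G :=
  (F2.free G a b).exists.choose f

/-- A model of the profinite completion of a (discrete) group `B`: a profinite group
`C` together with a homomorphism `ι : B → C` such that every homomorphism from `B`
to a profinite group extends uniquely to a continuous homomorphism on `C`.  This
universal property characterizes the profinite completion uniquely. -/
structure ProfiniteCompletionModel (B : Type) [Group B] : Type 1 where
  C : Type
  [grp : Group C]
  [top : TopologicalSpace C]
  [pro : IsProfiniteGroup C]
  ι : B →* C
  free : ∀ (H : Type) [Group H] [TopologicalSpace H] [IsProfiniteGroup H] (ψ : B →* H),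
    ∃! φ : ContinuousMonoidHom C H, ∀ b, φ (ι b) = ψ b

attribute [instance] ProfiniteCompletionModel.grp ProfiniteCompletionModel.top
  ProfiniteCompletionModel.pro

/-! ## Generic words in a group -/

section Words

variable {G : Type*} [Group G]

/-- `genY b k = b (k-1) ⋯ b 2 (b 1)² b 2 ⋯ b (k-1)` (equal to `1` for `k ≤ 1`). -/
def genY (b : ℕ → G) : ℕ → G
  | 0 => 1
  | 1 => 1
  | 2 => b 1 * b 1
  | (k+3) => b (k+2) * genY b (k+2) * b (k+2)

/-- `genProd b k = b 1 * b 2 * ⋯ * b k`. -/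
def genProd (b : ℕ → G) : ℕ → G
  | 0 => 1
  | (k+1) => genProd b k * b (k+1)

/-- `genW b k = (b 1 ⋯ b (k-1))^k`. -/
def genW (b : ℕ → G) (k : ℕ) : G := (genProd b (k-1))^k

end Words

/-! ## Braid groups -/

/-- Braid relations on `n` generators (indexed by `Fin n`, where index `i`
stands for `σ_{i+1}`). -/
def braidRels (n : ℕ) : Set (FreeGroup (Fin n)) :=
  {r | (∃ i j : Fin n, (i : ℕ) + 1 = (j : ℕ) ∧
          r = FreeGroup.of i * FreeGroup.of j * FreeGroup.of i *
              (FreeGroup.of j * FreeGroup.of i * FreeGroup.of j)⁻¹) ∨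
       (∃ i j : Fin n, (i : ℕ) + 2 ≤ (j : ℕ) ∧
          r = FreeGroup.of i * FreeGroup.of j * (FreeGroup.of j * FreeGroup.of i)⁻¹)}

/-- The Artin braid group `B_n` on `n` strands, with the `n-1` generators
`σ_1, …, σ_{n-1}`. -/
abbrev BraidGroup (n : ℕ) : Type := PresentedGroup (braidRels (n-1))

/-- The generator `σ_i` of the braid group `B_n` (junk value `1` when `i` is
out of range). -/
def σB (n : ℕ) (i : ℕ) : BraidGroup n :=
  if h : 1 ≤ i ∧ i < n then PresentedGroup.of (⟨i - 1, by omega⟩ : Fin (n-1)) else 1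

/-- `η_i = σ_{i-1} ⋯ σ₂ σ₁² σ₂ ⋯ σ_{i-1}` in `B_n`. -/
def ηB (n : ℕ) (i : ℕ) : BraidGroup n := genY (σB n) i

/-- `ω_i = (σ₁ ⋯ σ_{i-1})^i` in `B_n`. -/
def ωB (n : ℕ) (i : ℕ) : BraidGroup n := genW (σB n) i

/-! ## The Grothendieck-Teichmüller group -/

/-- The standard generators of the pure braid group `P₄ ⊂ B₄`, in the order
`x₁₂, x₁₃, x₁₄, x₂₃, x₂₄, x₃₄`. -/
def xGen : Fin 6 → BraidGroup 4 :=
  ![(σB 4 1)^2,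
    σB 4 2 * (σB 4 1)^2 * (σB 4 2)⁻¹,
    σB 4 3 * σB 4 2 * (σB 4 1)^2 * (σB 4 2)⁻¹ * (σB 4 3)⁻¹,
    (σB 4 2)^2,
    σB 4 3 * (σB 4 2)^2 * (σB 4 3)⁻¹,
    (σB 4 3)^2]

/-- The pure braid group `P₄` as a subgroup of `B₄`. -/
def P4 : Subgroup (BraidGroup 4) := Subgroup.closure (Set.range xGen)

/-- The generators `x_{ij}` as elements of `P₄`. -/
def xP (k : Fin 6) : P4 := ⟨xGen k, Subgroup.subset_closure (Set.mem_range_self k)⟩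

/-- The pair `(l, f)` belongs to the Grothendieck–Teichmüller group `GT`:
`l ∈ Ẑ×`, `l - 1 ∈ 2Ẑ`, `f` lies in the closure of the commutator subgroup of
`F̂₂` and the relations (I), (II), (III) hold. -/
def IsGT (Z : ZhatModel) (F2 : F2Model) (l : Z.R) (f : F2.F) : Prop :=
  IsUnit l ∧ (∃ m : Z.R, l - 1 = 2 * m) ∧
  f ∈ (commutator F2.F).topologicalClosure ∧
  -- (I)
  F2.eval f F2.x F2.y * F2.eval f F2.y F2.x = 1 ∧
  -- (II)
  (∀ m : Z.R, l - 1 = 2 * m →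
    F2.eval f (F2.x * F2.y)⁻¹ F2.x * Z.pow ((F2.x * F2.y)⁻¹) m *
      F2.eval f F2.y ((F2.x * F2.y)⁻¹) * Z.pow F2.y m *
      F2.eval f F2.x F2.y * Z.pow F2.x m = 1) ∧
  -- (III), in (any model of) the profinite completion of the pure braid group P₄
  (∀ CP : ProfiniteCompletionModel P4,
    F2.eval f (CP.ι (xP 0)) (CP.ι (xP 3) * CP.ι (xP 4)) *
      F2.eval f (CP.ι (xP 1) * CP.ι (xP 3)) (CP.ι (xP 5)) =
    F2.eval f (CP.ι (xP 3)) (CP.ι (xP 5)) *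
      F2.eval f (CP.ι (xP 0) * CP.ι (xP 1)) (CP.ι (xP 4) * CP.ι (xP 5)) *
      F2.eval f (CP.ι (xP 0)) (CP.ι (xP 3)))
/-! ## Words for the mapping class group -/

section MCGWords

variable {G : Type*} [Group G] (d : G) (a : ℕ → G)

/-- `t_k = a_{2k} a_{2k-1} a_{2k+1} a_{2k}`. -/
def tA (k : ℕ) : G := a (2*k) * a (2*k - 1) * a (2*k + 1) * a (2*k)

/-- `d' = y₅ d y₅⁻¹`. -/
def dpA : G := genY a 5 * d * (genY a 5)⁻¹

/-- `d₃ = (t₁⁻¹t₂⁻¹ d t₂t₁)(t₂⁻¹ d t₂) d a₁⁻¹ a₃⁻¹ a₅⁻¹`. -/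
def d3A : G :=
  ((tA a 1)⁻¹ * (tA a 2)⁻¹ * d * tA a 2 * tA a 1) * ((tA a 2)⁻¹ * d * tA a 2) * d *
    (a 1)⁻¹ * (a 3)⁻¹ * (a 5)⁻¹

/-- The element `t₂t₁t₃t₂`. -/
def tfour : G := tA a 2 * tA a 1 * tA a 3 * tA a 2

/-- The relator expressing relation (C'): `d'` commutes with `(t₂t₁t₃t₂) d (t₂t₁t₃t₂)⁻¹`. -/
def relCpA : G :=
  dpA d a * (tfour a * d * (tfour a)⁻¹) * (dpA d a)⁻¹ * (tfour a * d * (tfour a)⁻¹)⁻¹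

/-- `v₁ = d'`, `v_i = (t_{i-1} t_i) v_{i-1} (t_{i-1} t_i)⁻¹`. -/
def vA : ℕ → G
  | 0 => 1
  | 1 => dpA d a
  | (i+2) => (tA a (i+1) * tA a (i+2)) * vA (i+1) * (tA a (i+1) * tA a (i+2))⁻¹

/-- `u_i = a_{2i} a_{2i+1} a_{2i+2} v_i (a_{2i+2} a_{2i+1} a_{2i} a_{2i-1})⁻¹`. -/
def uA (i : ℕ) : G :=
  a (2*i) * a (2*i+1) * a (2*i+2) * vA d a i *
    (a (2*i+2) * a (2*i+1) * a (2*i) * a (2*i - 1))⁻¹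

/-- `d_g = (u₁⋯u_{g-1})⁻¹ a₁ (u₁⋯u_{g-1})`. -/
def dgA (g : ℕ) : G :=
  (genProd (uA d a) (g-1))⁻¹ * a 1 * genProd (uA d a) (g-1)

/-- The relator of relation (D): `y_{2g+1} d_g y_{2g+1}⁻¹ = d_g`. -/
def relDA (g : ℕ) : G :=
  genY a (2*g+1) * dgA d a g * (genY a (2*g+1))⁻¹ * (dgA d a g)⁻¹

/-- `genProd2 b k = b 2 * b 3 * ⋯ * b k`. -/
def genProd2 (b : ℕ → G) : ℕ → G
  | 0 => 1
  | 1 => 1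
  | (k+2) => genProd2 b (k+1) * b (k+2)

/-- `TTA a i = (t₂⋯t_i)·(t₁⋯t_{i-1})`. -/
def TTA (i : ℕ) : G := genProd2 (tA a) i * genProd (tA a) (i-1)

/-- The sequence `d₁ = a₁`, `d₂ = d`,
`d_{i+1} = a_{2i+1}⁻¹ a_{2i-1}⁻¹ d_{i-1}⁻¹ g_{2,i} g_{1,i} d_i`
where `g_{1,i} = t_i⁻¹ d_i t_i` and `g_{2,i} = (t₂⋯t_i t₁⋯t_{i-1})⁻¹ d (t₂⋯t_i t₁⋯t_{i-1})`. -/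
def dSeq : ℕ → G
  | 0 => 1
  | 1 => a 1
  | 2 => d
  | (i+3) =>
    (a (2*(i+2)+1))⁻¹ * (a (2*(i+2) - 1))⁻¹ * (dSeq (i+1))⁻¹ *
      ((TTA a (i+2))⁻¹ * d * TTA a (i+2)) *
      ((tA a (i+2))⁻¹ * dSeq (i+2) * tA a (i+2)) * dSeq (i+2)

/-- `g_{1,i} = t_i⁻¹ d_i t_i`. -/
def g1A (i : ℕ) : G := (tA a i)⁻¹ * dSeq d a i * tA a i

/-- `g_{2,i} = (t₂⋯t_i · t₁⋯t_{i-1})⁻¹ d (t₂⋯t_i · t₁⋯t_{i-1})`. -/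
def g2A (i : ℕ) : G := (TTA a i)⁻¹ * d * TTA a i

/-- `d′_i = y_{2i+1} d_i y_{2i+1}⁻¹`. -/
def dpSeq (i : ℕ) : G := genY a (2*i+1) * dSeq d a i * (genY a (2*i+1))⁻¹

/-- `g′_{1,i} = t_i⁻¹ d′_i t_i`. -/
def g1pA (i : ℕ) : G := (tA a i)⁻¹ * dpSeq d a i * tA a i

/-- `g′_{2,i} = (t₂⋯t_i · t₁⋯t_{i-1})⁻¹ d′ (t₂⋯t_i · t₁⋯t_{i-1})`. -/
def g2pA (i : ℕ) : G := (TTA a i)⁻¹ * dpA d a * TTA a i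

/-- `W_k = (t₁⋯t_{k-1})^k`. -/
def WWA (k : ℕ) : G := genW (tA a) k

/-- `Y_k = t_{k-1}⋯t₂t₁²t₂⋯t_{k-1}`. -/
def YYA (k : ℕ) : G := genY (tA a) k

end MCGWords

/-! ## The Wajnryb presentation of the mapping class group `Γ_{g,1}` -/

/-- The free-group generator `d`. -/
def dF (g : ℕ) : FreeGroup (Fin (2*g+1)) := FreeGroup.of ⟨0, by omega⟩

/-- The free-group generators `a_i`, `1 ≤ i ≤ 2g` (junk value `1` out of range). -/
def aF (g : ℕ) (i : ℕ) : FreeGroup (Fin (2*g+1)) :=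
  if h : 1 ≤ i ∧ i ≤ 2*g then FreeGroup.of ⟨i, by omega⟩ else 1

/-- The relators of the Wajnryb presentation of `Γ_{g,1}`: relations (A), (B),
(C) (when `g ≥ 3`) and (C') (when `g ≥ 4`). -/
def mcgRels (g : ℕ) : Set (FreeGroup (Fin (2*g+1))) :=
  {r | (∃ i : ℕ, 1 ≤ i ∧ i + 1 ≤ 2*g ∧
          r = aF g i * aF g (i+1) * aF g i * (aF g (i+1) * aF g i * aF g (i+1))⁻¹) ∨
       (∃ i j : ℕ, 1 ≤ i ∧ j ≤ 2*g ∧ i + 2 ≤ j ∧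
          r = aF g i * aF g j * (aF g j * aF g i)⁻¹) ∨
       (r = dF g * aF g 4 * dF g * (aF g 4 * dF g * aF g 4)⁻¹) ∨
       (∃ j : ℕ, 1 ≤ j ∧ j ≤ 2*g ∧ j ≠ 4 ∧
          r = dF g * aF g j * (aF g j * dF g)⁻¹) ∨
       (r = dF g * dpA (dF g) (aF g) * ((aF g 1 * aF g 2 * aF g 3)^4)⁻¹) ∨
       (3 ≤ g ∧ r = d3A (dF g) (aF g) * aF g 6 * d3A (dF g) (aF g) *
          (aF g 6 * d3A (dF g) (aF g) * aF g 6)⁻¹) ∨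
       (4 ≤ g ∧ r = relCpA (dF g) (aF g))}

/-- The mapping class group `Γ_{g,1}` of a genus-`g` surface with one marked point,
via its Wajnryb presentation. -/
abbrev Gamma1 (g : ℕ) : Type := PresentedGroup (mcgRels g)

/-- The generator `d` of `Γ_{g,1}`. -/
def dM (g : ℕ) : Gamma1 g := PresentedGroup.of ⟨0, by omega⟩

/-- The generators `a_i` of `Γ_{g,1}` (junk value `1` out of range). -/
def aM (g : ℕ) (i : ℕ) : Gamma1 g :=
  if h : 1 ≤ i ∧ i ≤ 2*g then PresentedGroup.of ⟨i, by omega⟩ else 1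

/-- The mapping class group `Γ_{g,0}` of a closed genus-`g` surface, obtained from the
Wajnryb presentation of `Γ_{g,1}` by adding the single relation (D). -/
abbrev Gamma0 (g : ℕ) : Type :=
  PresentedGroup (mcgRels g ∪ {relDA (dF g) (aF g) g})

/-- The generator `d` of `Γ_{g,0}`. -/
def dM0 (g : ℕ) : Gamma0 g := PresentedGroup.of ⟨0, by omega⟩

/-- The generators `a_i` of `Γ_{g,0}` (junk value `1` out of range). -/
def aM0 (g : ℕ) (i : ℕ) : Gamma0 g :=
  if h : 1 ≤ i ∧ i ≤ 2*g then PresentedGroup.of ⟨i, by omega⟩ else 1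

/-! Relation (B) reads `d' = d⁻¹ w` with `w = (a₁a₂a₃)⁴`, the full twist of the first four
strands, which commutes with `d`. Since `(a₁a₂a₃a₄)⁵ = w y₅` is central in `⟨a₁, …, a₄⟩`, `w` also
commutes with `y₅`. So conjugation by `y₅` maps `d ↦ d'` and `d' = d⁻¹ w ↦ d'⁻¹ w = d`, inverting
`d⁻¹ d'`. For larger `i`, `y_{i+1} = a_i y_i a_i` where `a_i` commutes with `d` and `a₁, a₂, a₃`,
hence with `d⁻¹ d'`. -/

section BraidSequences

variable {G : Type*} [Group G]

def genProdRev (b : ℕ → G) : ℕ → G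
  | 0 => 1
  | (k+1) => b (k+1) * genProdRev b k

theorem genY_succ (b : ℕ → G) {k : ℕ} (hk : 2 ≤ k) : genY b (k+1) = b k * genY b k * b k := by
  obtain ⟨k, rfl⟩ := Nat.exists_eq_add_of_le' hk
  rfl

theorem genY_eq_genProdRev_mul_genProd (b : ℕ → G) (k : ℕ) :
    genY b (k+2) = genProdRev b (k+1) * genProd b (k+1) := by
  induction k with
  | zero => simp [genY, genProdRev, genProd]
  | succ k ih =>
    rw [genY_succ b (by omega), ih]
    simp only [genProdRev, genProd, mul_assoc]

theorem commute_genProd_of_forall {b : ℕ → G} {x : G} {k : ℕ}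
    (h : ∀ l, 1 ≤ l → l ≤ k → Commute x (b l)) : Commute x (genProd b k) := by
  induction k with
  | zero => exact Commute.one_right x
  | succ k ih => exact (ih fun l h1 h2 => h l h1 (by omega)).mul_right (h (k+1) (by omega) le_rfl)

structure BraidRelations (a : ℕ → G) (n : ℕ) : Prop where
  braid : ∀ i, 1 ≤ i → i + 1 ≤ n → a i * a (i+1) * a i = a (i+1) * a i * a (i+1)
  comm : ∀ i j, 1 ≤ i → i + 2 ≤ j → j ≤ n → Commute (a i) (a j)

namespace BraidRelations

variable {a : ℕ → G} {n : ℕ}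

theorem commute_genProd (h : BraidRelations a n) {j k : ℕ} (hkj : k + 2 ≤ j) (hj : j ≤ n) :
    Commute (genProd a k) (a j) :=
  (commute_genProd_of_forall fun l hl _ => (h.comm l j hl (by omega) hj).symm).symm

theorem semiconjBy_genProd (h : BraidRelations a n) {j k : ℕ} (hj : 1 ≤ j) (hjk : j < k)
    (hk : k ≤ n) : SemiconjBy (genProd a k) (a j) (a (j+1)) := by
  induction k, hjk using Nat.le_induction with
  | base =>
    obtain ⟨m, rfl⟩ := Nat.exists_eq_add_of_le' hj
    show genProd a m * a (m+1) * a (m+2) * a (m+1) = a (m+2) * (genProd a m * a (m+1) * a (m+2))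
    rw [mul_assoc (genProd a m), mul_assoc (genProd a m), h.braid (m+1) hj hk,
      ← mul_assoc, ← mul_assoc, (h.commute_genProd le_rfl hk).eq]
    simp only [mul_assoc]
  | succ k hjk ih =>
    exact (ih (by omega)).mul_left (h.comm j (k+1) hj (by omega) hk).symm

theorem semiconjBy_genProd_pow (h : BraidRelations a n) {j k l : ℕ} (hl : 1 ≤ l)
    (hlk : l + j ≤ k) (hk : k ≤ n) : SemiconjBy (genProd a k ^ j) (a l) (a (l+j)) := by
  induction j with
  | zero => simp
  | succ j ih =>
    rw [pow_succ', ← add_assoc]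
    exact (h.semiconjBy_genProd (by omega) (by omega) hk).mul_left (ih (by omega))

theorem genProd_pow_mul_genProdRev (h : BraidRelations a n) {m : ℕ} (hm : m + 1 ≤ n) :
    ∀ {i j : ℕ}, i + j = m + 1 →
      genProd a (m+1) ^ j * genProdRev a i = genProd a m ^ j * genProdRev a (m+1) := by
  intro i j hij
  induction j generalizing i with
  | zero => simp [show i = m + 1 by omega]
  | succ j ih =>
    have hshift : a (m+1) * genProd a (m+1) ^ j = genProd a (m+1) ^ j * a (i+1) := by
      have := h.semiconjBy_genProd_pow (j := j) (l := i+1) (by omega) (by omega) hm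
      rw [show i + 1 + j = m + 1 by omega] at this
      exact this.symm
    calc genProd a (m+1) ^ (j+1) * genProdRev a i
        = genProd a m * (a (m+1) * genProd a (m+1) ^ j) * genProdRev a i := by
          rw [pow_succ', genProd, mul_assoc (genProd a m)]
      _ = genProd a m * (genProd a (m+1) ^ j * genProdRev a (i+1)) := by
          rw [hshift, genProdRev]; simp only [mul_assoc]
      _ = genProd a m ^ (j+1) * genProdRev a (m+1) := by
          rw [ih (by omega), pow_succ', mul_assoc]

/-- Full twist on `m + 2` strands = full twist on the first `m + 1` strands, followed by the last
strand going once around all the others. -/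
theorem genW_add_two (h : BraidRelations a n) {m : ℕ} (hm : m + 1 ≤ n) :
    genW a (m+2) = genW a (m+1) * genY a (m+2) := by
  have hfull := h.genProd_pow_mul_genProdRev hm (i := 0) (j := m + 1) (by omega)
  rw [genProdRev, mul_one] at hfull
  show genProd a (m+1) ^ (m+2) = genProd a m ^ (m+1) * genY a (m+2)
  rw [genY_eq_genProdRev_mul_genProd, ← mul_assoc, ← hfull, ← pow_succ]

theorem semiconjBy_genProd_sq (h : BraidRelations a n) {k : ℕ} (hk : 1 ≤ k) (hkn : k ≤ n) :
    SemiconjBy (genProd a k ^ 2) (a k) (a 1) := by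
  induction k, hk using Nat.le_induction with
  | base =>
    simp only [genProd, one_mul]
    exact (Commute.refl (a 1)).pow_left 2
  | succ k hk ih =>
    obtain ⟨m, rfl⟩ := Nat.exists_eq_add_of_le' hk
    have hsq : genProd a (m+2) ^ 2 = genProd a (m+1) ^ 2 * (a (m+2) * a (m+1)) := by
      have := h.genProd_pow_mul_genProdRev hkn (i := m) (j := 2) rfl
      rw [genProdRev, genProdRev, ← mul_assoc (a _), ← mul_assoc] at this
      exact mul_right_cancel this
    have hbraid : SemiconjBy (a (m+2) * a (m+1)) (a (m+2)) (a (m+1)) := by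
      simp only [SemiconjBy, ← mul_assoc]
      exact (h.braid (m+1) hk hkn).symm
    rw [hsq]
    exact (ih (by omega)).mul_left hbraid

theorem commute_genW (h : BraidRelations a n) {k l : ℕ} (hl : 1 ≤ l) (hlk : l ≤ k)
    (hk : k ≤ n) : Commute (genW a (k+1)) (a l) := by
  obtain ⟨p, rfl⟩ := Nat.exists_eq_add_of_le' hl
  obtain ⟨q, rfl⟩ := Nat.exists_eq_add_of_le hlk
  have hdown := h.semiconjBy_genProd_pow (j := q) (l := p+1) hl le_rfl hk
  have hwrap := h.semiconjBy_genProd_sq (k := p+1+q) (by omega) hk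
  have hup := h.semiconjBy_genProd_pow (j := p) (l := 1) le_rfl (by omega) hk
  rw [add_comm 1 p] at hup
  have := hup.mul_left (hwrap.mul_left hdown)
  rwa [← pow_add, ← pow_add, show p + (2 + q) = p + 1 + q + 1 by omega] at this

theorem commute_genW_genY (h : BraidRelations a n) {m : ℕ} (hm : m + 1 ≤ n) :
    Commute (genW a (m+1)) (genY a (m+2)) := by
  have hcentral : Commute (genW a (m+2)) (genW a (m+1)) :=
    (commute_genProd_of_forall fun l hl hlm => h.commute_genW hl (by omega) hm).pow_right _
  rw [eq_inv_mul_of_mul_eq (h.genW_add_two hm).symm]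
  exact (Commute.refl _).inv_right.mul_right hcentral.symm

end BraidRelations

end BraidSequences

section Anticommutation

variable {G : Type*} [Group G]

theorem semiconjBy_genY_of_commute {b : ℕ → G} {u : G} {k m : ℕ} (hk : 2 ≤ k) (hkm : k ≤ m)
    (hbase : SemiconjBy (genY b k) u u⁻¹) (hcomm : ∀ j, k ≤ j → j < m → Commute (b j) u) :
    SemiconjBy (genY b m) u u⁻¹ := by
  induction m, hkm using Nat.le_induction with
  | base => exact hbase
  | succ m hkm ih =>
    have hm := hcomm m hkm (Nat.lt_succ_self m)
    rw [genY_succ b (hk.trans hkm)]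
    exact (SemiconjBy.mul_left hm.inv_right (ih fun j hj _ => hcomm j hj (by omega))).mul_left hm

/-- `y` also conjugates `d' = d⁻¹ w` back to `w⁻¹ d w = d`. -/
theorem commute_and_semiconjBy_inv_mul {d d' y w : G} (hdw : Commute d w) (hyw : Commute y w)
    (hconj : SemiconjBy y d d') (hprod : d * d' = w) :
    Commute d d' ∧ SemiconjBy y (d⁻¹ * d') (d⁻¹ * d')⁻¹ := by
  have hd' : d' = d⁻¹ * w := eq_inv_mul_of_mul_eq hprod
  have hdd' : Commute d d' := hd' ▸ (Commute.refl d).inv_right.mul_right hdw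
  have hback : SemiconjBy y d' d := by
    have := hconj.inv_right.mul_right hyw
    rwa [← hd', inv_mul_eq_of_eq_mul (hdd'.eq ▸ hprod.symm)] at this
  refine ⟨hdd', ?_⟩
  rw [mul_inv_rev, inv_inv]
  exact hconj.inv_right.mul_right hback

end Anticommutation

section MappingClassGroup

theorem mk_aF (g i : ℕ) : PresentedGroup.mk (mcgRels g) (aF g i) = aM g i := by
  unfold aF aM
  split_ifs
  · rfl
  · exact map_one _

theorem mk_dF (g : ℕ) : PresentedGroup.mk (mcgRels g) (dF g) = dM g := rfl

theorem aM_eq_one {g i : ℕ} (hi : ¬(1 ≤ i ∧ i ≤ 2*g)) : aM g i = 1 := dif_neg hi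

theorem braidRelations_aM (g : ℕ) : BraidRelations (aM g) (2*g) where
  braid i h1 h2 := by
    simpa only [map_mul, mk_aF] using
      PresentedGroup.mk_eq_mk_of_mul_inv_mem (rels := mcgRels g) (Or.inl ⟨i, h1, h2, rfl⟩)
  comm i j h1 h2 h3 := by
    have h := PresentedGroup.mk_eq_mk_of_mul_inv_mem (rels := mcgRels g)
      (Or.inr (Or.inl ⟨i, j, h1, h3, h2, rfl⟩))
    simp only [map_mul, mk_aF] at h
    exact h

theorem commute_aM_aM {g i j : ℕ} (hij : i + 2 ≤ j) : Commute (aM g i) (aM g j) := by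
  by_cases hi : 1 ≤ i
  · by_cases hj : j ≤ 2*g
    · exact (braidRelations_aM g).comm i j hi hij hj
    · rw [aM_eq_one (i := j) (by omega)]; exact Commute.one_right _
  · rw [aM_eq_one (by omega)]; exact Commute.one_left _

theorem commute_dM_aM {g j : ℕ} (hj : j ≠ 4) : Commute (dM g) (aM g j) := by
  by_cases hjg : 1 ≤ j ∧ j ≤ 2*g
  · have h := PresentedGroup.mk_eq_mk_of_mul_inv_mem (rels := mcgRels g)
      (Or.inr (Or.inr (Or.inr (Or.inl ⟨j, hjg.1, hjg.2, hj, rfl⟩))))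
    simp only [map_mul, mk_aF, mk_dF] at h
    exact h
  · rw [aM_eq_one hjg]; exact Commute.one_right _

theorem dM_mul_dpA (g : ℕ) : dM g * dpA (dM g) (aM g) = genW (aM g) 4 := by
  have h := PresentedGroup.mk_eq_mk_of_mul_inv_mem (rels := mcgRels g)
    (Or.inr (Or.inr (Or.inr (Or.inr (Or.inl rfl)))))
  simp only [dpA, genY, map_mul, map_inv, map_pow, mk_aF, mk_dF] at h
  simpa only [dpA, genY, genW, genProd, one_mul, Nat.reduceAdd, Nat.reduceSub] using h

end MappingClassGroup

/-- Equation (5.8): in `Γ_{g,1}`, for `5 ≤ i ≤ g+1`, `y_i` anti-commutes with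
`d⁻¹d′`: `y_i d⁻¹ d′ = d d′⁻¹ y_i`, equivalently `d⁻¹ d′ y_i = y_i d d′⁻¹`. -/
theorem y_anticommutes_with_d_inv_dprime
    (g : ℕ) (hg : 4 ≤ g) :
    ∀ i : ℕ, 5 ≤ i → i ≤ g + 1 →
      genY (aM g) i * (dM g)⁻¹ * dpA (dM g) (aM g) =
        dM g * (dpA (dM g) (aM g))⁻¹ * genY (aM g) i ∧
      (dM g)⁻¹ * dpA (dM g) (aM g) * genY (aM g) i =
        genY (aM g) i * dM g * (dpA (dM g) (aM g))⁻¹ := by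
  intro i hi _
  have hdw : Commute (dM g) (genW (aM g) 4) :=
    (commute_genProd_of_forall fun _ _ hl => commute_dM_aM (by omega)).pow_right 4
  have hyw : Commute (genY (aM g) 5) (genW (aM g) 4) :=
    ((braidRelations_aM g).commute_genW_genY (m := 3) (by omega)).symm
  have hconj : SemiconjBy (genY (aM g) 5) (dM g) (dpA (dM g) (aM g)) := by
    simp [SemiconjBy, dpA]
  obtain ⟨hdd', hy5⟩ := commute_and_semiconjBy_inv_mul hdw hyw hconj (dM_mul_dpA g)
  have hy := semiconjBy_genY_of_commute (by norm_num) hi hy5 fun j hj _ => by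
    have hjd : Commute (aM g j) (dM g) := (commute_dM_aM (by omega)).symm
    have hjw : Commute (aM g j) (genW (aM g) 4) :=
      (commute_genProd_of_forall fun _ _ hl => (commute_aM_aM (by omega)).symm).pow_right 4
    rw [eq_inv_mul_of_mul_eq (dM_mul_dpA g)]
    exact hjd.inv_right.mul_right (hjd.inv_right.mul_right hjw)
  have hinv : ((dM g)⁻¹ * dpA (dM g) (aM g))⁻¹ = dM g * (dpA (dM g) (aM g))⁻¹ := by
    rw [mul_inv_rev, inv_inv, hdd'.inv_right.eq]
  have hy' := hy.inv_right
  rw [inv_inv, hinv] at hy'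
  rw [hinv] at hy
  exact ⟨by rw [mul_assoc, hy], by rw [mul_assoc (genY _ _), hy']⟩
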